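/- arXiv:1804.10563 — 4 statements merged into one kernel-verified Lean document; each statement's English description precedes it below -/
import Mathlib

section
/- For any finite index set A and any x : A → ℝ with 0 ≤ x_a ≤ 1 for all a ∈ A, the following inequalities hold: (1 − 1/e)·min{1, Σ_{a∈A} x_a} ≤ 1 − Π_{a∈A}(1 − x_a) ≤ min{1, Σ_{a∈A} x_a}. -/
lemma prod_one_sub_ge {A : Type*} (s : Finset A) (x : A → ℝ) (hx : ∀ a, 0 ≤ x a ∧ x a ≤ 1) :
    1 - ∑ a ∈ s, x a ≤ ∏ a ∈ s, (1 - x a) := by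
  classical
  induction s using Finset.induction with
  | empty => simp
  | @insert a s h ih =>
    rw [Finset.sum_insert h, Finset.prod_insert h]
    have h1 : 0 ≤ 1 - x a := by linarith [(hx a).2]
    have h2 : ∏ b ∈ s, (1 - x b) ≤ 1 :=
      Finset.prod_le_one (fun b _ => by linarith [(hx b).2]) (fun b _ => by linarith [(hx b).1])
    nlinarith [(hx a).1]

/-- (1 − 1/e)·min{1, Σ x_a} ≤ 1 − Π (1 − x_a) ≤ min{1, Σ x_a}. -/
theorem prod_complement_sandwich {A : Type*} [Fintype A] [Nonempty A]
    (x : A → ℝ) (hx : ∀ a, 0 ≤ x a ∧ x a ≤ 1) :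
    (1 - 1 / Real.exp 1) * min 1 (∑ a, x a) ≤ 1 - ∏ a, (1 - x a) ∧
    1 - ∏ a, (1 - x a) ≤ min 1 (∑ a, x a) := by
  set S := ∑ a, x a with hS
  have hS0 : 0 ≤ S := Finset.sum_nonneg fun a _ => (hx a).1
  have hP0 : 0 ≤ ∏ a, (1 - x a) :=
    Finset.prod_nonneg fun a _ => by linarith [(hx a).2]
  have hW : 1 - S ≤ ∏ a, (1 - x a) := prod_one_sub_ge _ x hx
  have hPexp : ∏ a, (1 - x a) ≤ Real.exp (-S) := by
    calc ∏ a, (1 - x a) ≤ ∏ a, Real.exp (-x a) :=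
          Finset.prod_le_prod (fun a _ => by linarith [(hx a).2])
            (fun a _ => by linarith [Real.add_one_le_exp (-x a)])
      _ = Real.exp (∑ a, -x a) := (Real.exp_sum _ _).symm
      _ = Real.exp (-S) := by rw [← Finset.sum_neg_distrib]
  constructor
  · rcases le_total 1 S with h | h
    · rw [min_eq_left h, mul_one]
      have h1 : Real.exp (-S) ≤ Real.exp (-1) := Real.exp_le_exp.2 (by linarith)
      have h2 : Real.exp (-1) = 1 / Real.exp 1 := by rw [Real.exp_neg, one_div]
      linarith
    · rw [min_eq_right h]
      have hc := convexOn_exp.2 (Set.mem_univ (0:ℝ)) (Set.mem_univ (-1:ℝ))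
        (by linarith : (0:ℝ) ≤ 1 - S) hS0 (by ring)
      simp only [smul_eq_mul, mul_zero, mul_neg, mul_one, zero_add, Real.exp_zero] at hc
      have h2 : Real.exp (-1) = 1 / Real.exp 1 := by rw [Real.exp_neg, one_div]
      nlinarith
  · exact le_min (by linarith) (by linarith)
end

section
/- Let V be a finite set, succ : V → Finset V, c : V → ℝ≥0, and define for x ∈ [0,1]^V the multilinear-type extension F(x) = Σ_{v∈V} c_v·(1 − Π_{u∈{v}∪succ(v)}(1−x_u)) and the concave relaxation L(x) = Σ_{v∈V} c_v·min{1, Σ_{u∈{v}∪succ(v)} x_u}. Then (1 − 1/e)·L(x) ≤ F(x) ≤ L(x) for all x ∈ [0,1]^V. -/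
/-!
Each summand is compared separately. Writing `S = ∑ u, x u` over the closed neighbourhood of `v`,
the Weierstrass product inequality `1 - S ≤ ∏ (1 - x u)` together with `∏ (1 - x u) ≥ 0` gives
`1 - ∏ (1 - x u) ≤ min 1 S`. Conversely `1 - t ≤ exp (-t)` gives `∏ (1 - x u) ≤ exp (-S)`, and
the concave function `1 - exp (-S)` vanishes at `0`, is increasing, and takes the value `1 - 1/e`
at `1`, so it dominates `(1 - 1/e) · min 1 S`.
-/

open Finset Real

theorem one_sub_sum_le_prod_one_sub {ι : Type*} (s : Finset ι) {x : ι → ℝ}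
    (h0 : ∀ i ∈ s, 0 ≤ x i) (h1 : ∀ i ∈ s, x i ≤ 1) :
    1 - ∑ i ∈ s, x i ≤ ∏ i ∈ s, (1 - x i) := by
  induction s using Finset.cons_induction with
  | empty => simp
  | cons a s ha ih =>
    simp only [forall_mem_cons] at h0 h1
    rw [sum_cons, prod_cons]
    have hsum : 0 ≤ ∑ i ∈ s, x i := sum_nonneg h0.2
    calc 1 - (x a + ∑ i ∈ s, x i)
        ≤ (1 - x a) * (1 - ∑ i ∈ s, x i) := by nlinarith [h0.1]
      _ ≤ (1 - x a) * ∏ i ∈ s, (1 - x i) :=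
        mul_le_mul_of_nonneg_left (ih h0.2 h1.2) (sub_nonneg.2 h1.1)

theorem prod_one_sub_le_exp_neg_sum {ι : Type*} (s : Finset ι) {x : ι → ℝ}
    (h1 : ∀ i ∈ s, x i ≤ 1) :
    ∏ i ∈ s, (1 - x i) ≤ exp (-∑ i ∈ s, x i) :=
  calc ∏ i ∈ s, (1 - x i)
      ≤ ∏ i ∈ s, exp (-x i) :=
        prod_le_prod (fun i hi => sub_nonneg.2 (h1 i hi)) fun i _ => one_sub_le_exp_neg (x i)
    _ = exp (-∑ i ∈ s, x i) := by rw [← exp_sum, sum_neg_distrib]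

theorem one_sub_exp_neg_one_mul_min_le {t : ℝ} (ht : 0 ≤ t) :
    (1 - exp (-1)) * min 1 t ≤ 1 - exp (-t) := by
  rcases le_total 1 t with h | h
  · rw [min_eq_left h, mul_one]
    gcongr
  · rw [min_eq_right h]
    -- convexity of `exp` on the segment `[-1, 0]`
    have hconv := convexOn_exp.2 (Set.mem_univ 0) (Set.mem_univ (-1)) (sub_nonneg.2 h) ht
      (sub_add_cancel 1 t)
    simp only [smul_eq_mul, mul_zero, zero_add, mul_neg_one, exp_zero, mul_one] at hconv
    linarith

section Summand

variable {ι : Type*} (s : Finset ι) {x : ι → ℝ}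

theorem one_sub_prod_one_sub_le_min (h0 : ∀ i ∈ s, 0 ≤ x i) (h1 : ∀ i ∈ s, x i ≤ 1) :
    1 - ∏ i ∈ s, (1 - x i) ≤ min 1 (∑ i ∈ s, x i) := by
  have hprod : 0 ≤ ∏ i ∈ s, (1 - x i) := prod_nonneg fun i hi => sub_nonneg.2 (h1 i hi)
  have := one_sub_sum_le_prod_one_sub s h0 h1
  exact le_min (by linarith) (by linarith)

theorem one_sub_exp_neg_one_mul_min_le_one_sub_prod (h0 : ∀ i ∈ s, 0 ≤ x i)
    (h1 : ∀ i ∈ s, x i ≤ 1) :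
    (1 - exp (-1)) * min 1 (∑ i ∈ s, x i) ≤ 1 - ∏ i ∈ s, (1 - x i) := by
  have := prod_one_sub_le_exp_neg_sum s h1
  linarith [one_sub_exp_neg_one_mul_min_le (sum_nonneg h0)]

end Summand

/-- the concave relaxation L sandwiches F: (1−1/e)L ≤ F ≤ L on [0,1]^V. -/
theorem caching_gain_concave_relaxation_sandwich {V : Type*} [Fintype V] [DecidableEq V]
    (succ : V → Finset V) (c : V → ℝ) (hc : ∀ v, 0 ≤ c v)
    (x : V → ℝ) (hx : ∀ v, 0 ≤ x v ∧ x v ≤ 1) :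
    (1 - 1 / Real.exp 1) *
        (∑ v, c v * min 1 (∑ u ∈ insert v (succ v), x u)) ≤
      ∑ v, c v * (1 - ∏ u ∈ insert v (succ v), (1 - x u)) ∧
    ∑ v, c v * (1 - ∏ u ∈ insert v (succ v), (1 - x u)) ≤
      ∑ v, c v * min 1 (∑ u ∈ insert v (succ v), x u) := by
  have h0 (s : Finset V) : ∀ u ∈ s, 0 ≤ x u := fun u _ => (hx u).1
  have h1 (s : Finset V) : ∀ u ∈ s, x u ≤ 1 := fun u _ => (hx u).2
  constructor
  · rw [one_div, ← exp_neg, mul_sum]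
    refine sum_le_sum fun v _ => ?_
    rw [mul_left_comm]
    exact mul_le_mul_of_nonneg_left
      (one_sub_exp_neg_one_mul_min_le_one_sub_prod _ (h0 _) (h1 _)) (hc v)
  · exact sum_le_sum fun v _ =>
      mul_le_mul_of_nonneg_left (one_sub_prod_one_sub_le_min _ (h0 _) (h1 _)) (hc v)
end

section
/- Let V be a finite set with sizes s : V → ℝ>0, capacity K > 0, and suppose all s_v = 1 and K is a positive integer. Let F be a monotone submodular set function on V with F(∅) = 0. The greedy algorithm, which starting from S_0 = ∅ repeatedly adds the element maximizing the marginal gain until |S| = K, produces a set S_K with F(S_K) ≥ (1 − 1/e)·max{F(S) : |S| ≤ K}. -/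
/-!
Fix `T` with `|T| ≤ K` and a greedy set `S`. By monotonicity and submodularity,
`F T - F S ≤ F (T ∪ S) - F S` is at most the sum of the marginal gains at `S` of the elements of
`T \ S`, hence at most `K` times the greedy gain. So each greedy step shrinks the gap `F T - F S`
by a factor `1 - 1/K`, and after `K` steps the gap is at most `(1 - 1/K)^K F T ≤ e⁻¹ F T`.
-/

open Finset

section Submodular

variable {V : Type*} [DecidableEq V] {F : Finset V → ℝ}

variable (F) in
def IsSubmodular : Prop :=
  ∀ S T : Finset V, ∀ w : V, S ⊆ T → w ∉ T → F (insert w T) - F T ≤ F (insert w S) - F S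

theorem sub_le_sum_marginal_of_submodular
    (hsub : IsSubmodular F) (B S : Finset V) (hBS : Disjoint B S) :
    F (B ∪ S) - F S ≤ ∑ w ∈ B, (F (insert w S) - F S) := by
  induction B using Finset.induction_on with
  | empty => simp
  | insert a B haB ih =>
    rw [Finset.disjoint_insert_left] at hBS
    have hmarginal : F (insert a (B ∪ S)) - F (B ∪ S) ≤ F (insert a S) - F S :=
      hsub S (B ∪ S) a subset_union_right (by simp [haB, hBS.1])
    rw [insert_union, sum_insert haB]
    linarith [ih hBS.2]

theorem sub_le_mul_of_maximal_marginal
    (hmono : Monotone F)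
    (hsub : IsSubmodular F)
    {S : Finset V} {w : V}
    (hmax : ∀ w' ∉ S, F (insert w' S) - F S ≤ F (insert w S) - F S)
    {K : ℕ} {T : Finset V} (hT : #T ≤ K) :
    F T - F S ≤ K * (F (insert w S) - F S) := by
  have hgain : 0 ≤ F (insert w S) - F S := sub_nonneg.2 (hmono (subset_insert w S))
  calc F T - F S ≤ F (T \ S ∪ S) - F S := by
        rw [sdiff_union_self_eq_union]
        linarith [hmono (subset_union_left : T ⊆ T ∪ S)]
    _ ≤ ∑ w' ∈ T \ S, (F (insert w' S) - F S) :=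
        sub_le_sum_marginal_of_submodular hsub _ _ sdiff_disjoint
    _ ≤ #(T \ S) * (F (insert w S) - F S) := by
        rw [← nsmul_eq_mul]
        exact sum_le_card_nsmul _ _ _ fun w' hw' => hmax w' (mem_sdiff.1 hw').2
    _ ≤ K * (F (insert w S) - F S) := by
        gcongr
        exact (card_le_card sdiff_subset).trans hT

theorem sub_insert_le_of_maximal_marginal
    (hmono : Monotone F)
    (hsub : IsSubmodular F)
    {S : Finset V} {w : V}
    (hmax : ∀ w' ∉ S, F (insert w' S) - F S ≤ F (insert w S) - F S)
    {K : ℕ} (hK : 0 < K) {T : Finset V} (hT : #T ≤ K) :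
    F T - F (insert w S) ≤ (1 - 1 / K) * (F T - F S) := by
  have hbound := sub_le_mul_of_maximal_marginal hmono hsub hmax hT
  have hgap_div : (F T - F S) / K ≤ F (insert w S) - F S := by
    rw [div_le_iff₀ (by exact_mod_cast hK)]
    linarith
  rw [one_sub_mul, one_div_mul_eq_div]
  linarith

end Submodular

theorem greedy_one_minus_inv_e_general {V : Type*} [DecidableEq V]
    (F : Finset V → ℝ)
    (hmono : ∀ S T : Finset V, S ⊆ T → F S ≤ F T)
    (hsub : ∀ S T : Finset V, ∀ w : V, S ⊆ T → w ∉ T →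
      F (insert w T) - F T ≤ F (insert w S) - F S)
    (hzero : F ∅ = 0)
    (K : ℕ) (hK : 0 < K)
    (S : ℕ → Finset V) (hS0 : S 0 = ∅)
    (hgreedy : ∀ i < K, ∃ w ∉ S i, S (i + 1) = insert w (S i) ∧
      ∀ w' ∉ S i, F (insert w' (S i)) - F (S i) ≤ F (insert w (S i)) - F (S i)) :
    ∀ T : Finset V, T.card ≤ K → (1 - 1 / Real.exp 1) * F T ≤ F (S K) := by
  intro T hT
  have hstep : ∀ i < K, F T - F (S (i + 1)) ≤ (1 - 1 / K) * (F T - F (S i)) := by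
    intro i hi
    obtain ⟨w, -, hSucc, hmax⟩ := hgreedy i hi
    rw [hSucc]
    exact sub_insert_le_of_maximal_marginal hmono hsub hmax hK hT
  have hratio : (0 : ℝ) ≤ 1 - 1 / K :=
    sub_nonneg.2 (div_le_one_of_le₀ (by exact_mod_cast hK) K.cast_nonneg)
  have hgap := le_geom (u := fun i => F T - F (S i)) hratio K hstep
  have hpow : (1 - 1 / K : ℝ) ^ K ≤ 1 / Real.exp 1 := by
    simpa [Real.exp_neg] using
      Real.one_sub_div_pow_le_exp_neg (n := K) (t := 1) (by exact_mod_cast hK)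
  have hFT : 0 ≤ F T := hzero ▸ hmono ∅ T T.empty_subset
  simp only [hS0, hzero, sub_zero] at hgap
  nlinarith [mul_le_mul_of_nonneg_right hpow hFT]

/-- the greedy algorithm achieves a (1 − 1/e) approximation for monotone
submodular maximization under a cardinality constraint (unit sizes, integer capacity K). -/
theorem greedy_one_minus_inv_e {V : Type*} [Fintype V] [DecidableEq V]
    (F : Finset V → ℝ)
    (hmono : ∀ S T : Finset V, S ⊆ T → F S ≤ F T)
    (hsub : ∀ S T : Finset V, ∀ w : V, S ⊆ T → w ∉ T →
      F (insert w T) - F T ≤ F (insert w S) - F S)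
    (hzero : F ∅ = 0)
    (K : ℕ) (hK : 0 < K) (hKcard : K ≤ Fintype.card V)
    (S : ℕ → Finset V) (hS0 : S 0 = ∅)
    (hgreedy : ∀ i < K, ∃ w ∉ S i, S (i + 1) = insert w (S i) ∧
      ∀ w' ∉ S i, F (insert w' (S i)) - F (S i) ≤ F (insert w (S i)) - F (S i)) :
    ∀ T : Finset V, T.card ≤ K → (1 - 1 / Real.exp 1) * F T ≤ F (S K) :=
  greedy_one_minus_inv_e_general F hmono hsub hzero K hK S hS0 hgreedy
end

section
/- Let F be a monotone submodular function on finite V with F(∅)=0, and let S* be an optimal solution of size at most K. If S_i is the greedy set after i steps, then the greedy marginal gain at step i+1 satisfies F(S_{i+1}) − F(S_i) ≥ (F(S*) − F(S_i))/K. -/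
/-- the greedy marginal gain at each step is at least (F(S*) − F(S_i))/K. -/
theorem greedy_marginal_gain {V : Type*} [Fintype V] [DecidableEq V]
    (F : Finset V → ℝ)
    (hmono : ∀ S T : Finset V, S ⊆ T → F S ≤ F T)
    (hsub : ∀ S T : Finset V, ∀ w : V, S ⊆ T → w ∉ T →
      F (insert w T) - F T ≤ F (insert w S) - F S)
    (hzero : F ∅ = 0)
    (K : ℕ) (hK : 1 ≤ K)
    (Sstar : Finset V) (hcard : Sstar.card ≤ K)
    (hopt : ∀ T : Finset V, T.card ≤ K → F T ≤ F Sstar)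
    (Si : Finset V) (w : V) (hw : w ∉ Si)
    (hbest : ∀ w' ∉ Si, F (insert w' Si) - F Si ≤ F (insert w Si) - F Si) :
    (F Sstar - F Si) / K ≤ F (insert w Si) - F Si := by
  set g := F (insert w Si) - F Si with hg
  have hg0 : 0 ≤ g := by
    have := hmono Si (insert w Si) (Finset.subset_insert _ _)
    linarith
  have key : ∀ T : Finset V, F (Si ∪ T) ≤ F Si + T.card * g := by
    intro T
    induction T using Finset.induction_on with
    | empty => simp
    | @insert a T ha ih =>
      rw [Finset.card_insert_of_notMem ha]
      rw [Finset.union_insert]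
      by_cases haS : a ∈ Si ∪ T
      · rw [Finset.insert_eq_self.mpr haS]
        push_cast
        nlinarith
      · have h1 : F (insert a (Si ∪ T)) - F (Si ∪ T) ≤ F (insert a Si) - F Si :=
          hsub Si (Si ∪ T) a Finset.subset_union_left haS
        have haSi : a ∉ Si := fun h => haS (Finset.mem_union_left _ h)
        have h2 := hbest a haSi
        push_cast
        nlinarith
  have h3 : F Sstar ≤ F (Si ∪ Sstar) := hmono _ _ Finset.subset_union_right
  have h4 := key Sstar
  have h5 : (Sstar.card : ℝ) * g ≤ (K : ℝ) * g := by
    apply mul_le_mul_of_nonneg_right _ hg0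
    exact_mod_cast hcard
  have hKpos : (0 : ℝ) < K := by exact_mod_cast hK
  rw [div_le_iff₀ hKpos]
  nlinarith
end
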